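/- With F^s and F^{s,j}_{Q_k} as above, fix s₀ ≥ 2 and Q_k ∈ F^{s₀}. Then the Lebesgue measure of F^{s,j}_{Q_k} satisfies |F^{s,j}_{Q_k}| ≤ C·2^{(−s₀+j)(n−1)−s}, where C depends only on n and K. -/

import Mathlib

open Set Metric MeasureTheory

def cube (n : ℕ) (c : EuclideanSpace ℝ (Fin n)) (r : ℝ) : Set (EuclideanSpace ℝ (Fin n)) :=
  {x | ∀ i, |x i - c i| ≤ r}

noncomputable def sDist {α : Type*} [PseudoMetricSpace α] (s t : Set α) : ℝ :=
  sInf {d : ℝ | ∃ x ∈ s, ∃ y ∈ t, d = dist x y}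

def IsWhitneyOf (n : ℕ) (Ω : Set (EuclideanSpace ℝ (Fin n)))
    (c : ℕ → EuclideanSpace ℝ (Fin n)) (r : ℕ → ℝ) : Prop :=
  (∀ k, 0 < r k) ∧
  Ω = ⋃ k, cube n (c k) (r k) ∧
  (∀ k l, k ≠ l → interior (cube n (c k) (r k)) ∩ interior (cube n (c l) (r l)) = ∅) ∧
  (∀ k, Metric.diam (cube n (c k) (r k)) ≤ sDist (cube n (c k) (r k)) (frontier Ω) ∧
    sDist (cube n (c k) (r k)) (frontier Ω) ≤ 4 * Metric.diam (cube n (c k) (r k)))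

def IsLipGraphDomain (d : ℕ) (K : ℝ) (Ω : Set (EuclideanSpace ℝ (Fin (d + 1))))
    (φ : EuclideanSpace ℝ (Fin d) → ℝ) : Prop :=
  (∀ x' ∈ ball (0 : EuclideanSpace ℝ (Fin d)) 1, |φ x'| ≤ K) ∧
  (∀ x' ∈ ball (0 : EuclideanSpace ℝ (Fin d)) 1, ∀ y' ∈ ball (0 : EuclideanSpace ℝ (Fin d)) 1,
    |φ x' - φ y'| ≤ K * dist x' y') ∧
  Ω ∩ ball 0 1 =
    {x : EuclideanSpace ℝ (Fin (d + 1)) | φ (WithLp.toLp 2 (fun i : Fin d => x i.castSucc)) < x (Fin.last d)} ∩ ball 0 1 ∧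
  frontier Ω ∩ ball 0 1 =
    {x : EuclideanSpace ℝ (Fin (d + 1)) | x (Fin.last d) = φ (WithLp.toLp 2 (fun i : Fin d => x i.castSucc))} ∩ ball 0 1

/-- Membership of the `k`-th Whitney cube in the family `F^s`:
`2^{-s-1} < d_k ≤ 2^{-s}` and `Q̃_k ⊆ Ω ∩ B_{1/4}`. -/
def memF (d : ℕ) (Ω : Set (EuclideanSpace ℝ (Fin (d + 1))))
    (c : ℕ → EuclideanSpace ℝ (Fin (d + 1))) (r : ℕ → ℝ) (s : ℤ) (k : ℕ) : Prop :=
  (2 : ℝ) ^ (-s - 1) < Metric.diam (cube (d + 1) (c k) (r k)) ∧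
  Metric.diam (cube (d + 1) (c k) (r k)) ≤ (2 : ℝ) ^ (-s) ∧
  cube (d + 1) (c k) (6 / 5 * r k) ⊆ Ω ∩ ball 0 (1 / 4)

/-- Membership of the `l`-th Whitney cube in the family `F^{s,j}_{Q_k}`, for a fixed
reference cube `Q_k ∈ F^{s₀}`: `Q_l ∈ F^s` with `dist(Q_l, Q_k) ≤ 2^{-s₀+5}` when `j = 0`,
and `2^{-s₀+j+4} < dist(Q_l, Q_k) ≤ 2^{-s₀+j+5}` when `j ≥ 1`. -/
def memFsj (d : ℕ) (Ω : Set (EuclideanSpace ℝ (Fin (d + 1))))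
    (c : ℕ → EuclideanSpace ℝ (Fin (d + 1))) (r : ℕ → ℝ)
    (s₀ : ℤ) (k : ℕ) (s : ℤ) (j : ℕ) (l : ℕ) : Prop :=
  memF d Ω c r s l ∧
    (if j = 0 then
      sDist (cube (d + 1) (c l) (r l)) (cube (d + 1) (c k) (r k)) ≤ (2 : ℝ) ^ (-s₀ + 5)
    else
      (2 : ℝ) ^ (-s₀ + (j : ℤ) + 4) <
          sDist (cube (d + 1) (c l) (r l)) (cube (d + 1) (c k) (r k)) ∧
        sDist (cube (d + 1) (c l) (r l)) (cube (d + 1) (c k) (r k)) ≤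
          (2 : ℝ) ^ (-s₀ + (j : ℤ) + 5))

/-!
Every cube `Q_l` of `F^{s,j}_{Q_k}` is a Whitney cube, so its diameter is at most its distance to
`∂(Ω ∩ B₁)`, which through `Q_k` is at most `dist(Q_l, Q_k) + 5 diam Q_k = O(2^{-s₀+j})`. Hence
`Q_l` stays within `O(2^{-s₀+j})` of the centre of `Q_k`. Vertically, `Q_l` lies within
`6 diam Q_l` of a boundary point, and the Lipschitz bound turns that into a height of at most
`6(1 + K) 2^{-s}` above the graph of `φ`. So the union sits in the region between the graph and
its translate by `6(1 + K) 2^{-s}` over a `d`-dimensional cube of side `O(2^{-s₀+j})`, whose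
volume is computed by Fubini.
-/

section sDist

variable {α : Type*} [PseudoMetricSpace α] {s t u : Set α} {x y : α}

lemma sDist_nonneg (s t : Set α) : 0 ≤ sDist s t :=
  Real.sInf_nonneg fun _ ⟨_, _, _, _, hd⟩ => hd ▸ dist_nonneg

@[simp]
lemma sDist_empty_right (s : Set α) : sDist s ∅ = 0 := by
  simp [sDist]

lemma nonempty_of_sDist_pos (h : 0 < sDist s t) : t.Nonempty := by
  contrapose! h
  simp [h]

lemma sDist_le_dist (hx : x ∈ s) (hy : y ∈ t) : sDist s t ≤ dist x y :=
  csInf_le ⟨0, fun _ ⟨_, _, _, _, hd⟩ => hd ▸ dist_nonneg⟩ ⟨x, hx, y, hy, rfl⟩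

lemma exists_dist_lt_sDist_add (hs : s.Nonempty) (ht : t.Nonempty) {ε : ℝ} (hε : 0 < ε) :
    ∃ x ∈ s, ∃ y ∈ t, dist x y < sDist s t + ε := by
  obtain ⟨x, hx⟩ := hs
  obtain ⟨y, hy⟩ := ht
  obtain ⟨_, ⟨x, hx, y, hy, rfl⟩, hlt⟩ :=
    Real.lt_sInf_add_pos (s := {d | ∃ x ∈ s, ∃ y ∈ t, d = dist x y}) ⟨_, x, hx, y, hy, rfl⟩ hε
  exact ⟨x, hx, y, hy, hlt⟩

lemma exists_dist_lt_diam_add_sDist_add (hs : Bornology.IsBounded s) (hx : x ∈ s)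
    (ht : t.Nonempty) {ε : ℝ} (hε : 0 < ε) : ∃ y ∈ t, dist x y < diam s + sDist s t + ε := by
  obtain ⟨x', hx', y, hy, hlt⟩ := exists_dist_lt_sDist_add ⟨x, hx⟩ ht hε
  exact ⟨y, hy, by linarith [dist_triangle x x' y, dist_le_diam_of_mem hs hx hx']⟩

lemma dist_le_diam_add_sDist_add_diam (hs : Bornology.IsBounded s) (ht : Bornology.IsBounded t)
    (hx : x ∈ s) (hy : y ∈ t) : dist x y ≤ diam s + sDist s t + diam t := by
  refine le_of_forall_pos_lt_add fun ε hε => ?_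
  obtain ⟨y', hy', hlt⟩ := exists_dist_lt_diam_add_sDist_add hs hx ⟨y, hy⟩ hε
  linarith [dist_triangle x y' y, dist_le_diam_of_mem ht hy' hy]

lemma sDist_le_sDist_add_diam_add_sDist (hs : s.Nonempty) (ht : Bornology.IsBounded t)
    (ht' : t.Nonempty) (hu : u.Nonempty) : sDist s u ≤ sDist s t + diam t + sDist t u := by
  refine le_of_forall_pos_lt_add fun ε hε => ?_
  obtain ⟨x, hx, y, hy, hxy⟩ := exists_dist_lt_sDist_add hs ht' (half_pos hε)
  obtain ⟨z, hz, hyz⟩ := exists_dist_lt_diam_add_sDist_add ht hy hu (half_pos hε)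
  linarith [sDist_le_dist hx hz, dist_triangle x y z]

end sDist

section cube

variable {n : ℕ}

lemma mem_cube_self (c : EuclideanSpace ℝ (Fin n)) {r : ℝ} (hr : 0 ≤ r) : c ∈ cube n c r :=
  fun i => by simpa using hr

lemma cube_mono (c : EuclideanSpace ℝ (Fin n)) {r r' : ℝ} (h : r ≤ r') :
    cube n c r ⊆ cube n c r' :=
  fun _ hx i => (hx i).trans h

lemma cube_eq_preimage (c : EuclideanSpace ℝ (Fin n)) (r : ℝ) :
    cube n c r = WithLp.ofLp ⁻¹' Set.univ.pi fun i => Icc (c i - r) (c i + r) := by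
  ext x
  simp only [cube, mem_ofPred_eq, mem_preimage, mem_univ_pi, mem_Icc, abs_sub_le_iff]
  exact forall_congr' fun i => by constructor <;> intro h <;> constructor <;> linarith [h.1, h.2]

lemma isBounded_cube (c : EuclideanSpace ℝ (Fin n)) (r : ℝ) :
    Bornology.IsBounded (cube n c r) := by
  rw [cube_eq_preimage]
  exact (PiLp.antilipschitzWith_ofLp 2 _).isBounded_preimage
    (isCompact_univ_pi fun _ => isCompact_Icc).isBounded

lemma measurableSet_cube (c : EuclideanSpace ℝ (Fin n)) (r : ℝ) : MeasurableSet (cube n c r) := by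
  rw [cube_eq_preimage]
  exact (MeasurableEquiv.toLp 2 _).symm.measurable
    (MeasurableSet.univ_pi fun _ => measurableSet_Icc)

lemma volume_cube (c : EuclideanSpace ℝ (Fin n)) (r : ℝ) :
    volume (cube n c r) = ENNReal.ofReal (2 * r) ^ n := by
  rw [cube_eq_preimage, (PiLp.volume_preserving_ofLp _).measure_preimage
    (MeasurableSet.univ_pi fun _ => measurableSet_Icc).nullMeasurableSet, volume_pi_pi]
  simp [Real.volume_Icc, two_mul]

end cube

section lastCoordinate

variable {d : ℕ}

def dropLast (x : EuclideanSpace ℝ (Fin (d + 1))) : EuclideanSpace ℝ (Fin d) :=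
  WithLp.toLp 2 fun i => x i.castSucc

lemma dist_dropLast_le (x y : EuclideanSpace ℝ (Fin (d + 1))) :
    dist (dropLast x) (dropLast y) ≤ dist x y := by
  rw [EuclideanSpace.dist_eq, EuclideanSpace.dist_eq, Fin.sum_univ_castSucc]
  exact Real.sqrt_le_sqrt (le_add_of_nonneg_right (sq_nonneg _))

lemma dropLast_mem_cube {x c : EuclideanSpace ℝ (Fin (d + 1))} {R : ℝ} (h : dist x c ≤ R) :
    dropLast x ∈ cube d (dropLast c) R := fun i =>
  (Real.dist_eq _ _ ▸ PiLp.dist_apply_le x c i.castSucc).trans h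

lemma dropLast_mem_ball {x : EuclideanSpace ℝ (Fin (d + 1))} (hx : x ∈ ball 0 1) :
    dropLast x ∈ ball 0 1 :=
  mem_ball.2 ((dist_dropLast_le x 0).trans_lt (mem_ball.1 hx))

variable (d) in
def splitLast : EuclideanSpace ℝ (Fin (d + 1)) ≃ᵐ EuclideanSpace ℝ (Fin d) × ℝ :=
  (MeasurableEquiv.toLp 2 _).symm.trans <|
    (MeasurableEquiv.piFinSuccAbove (fun _ => ℝ) (Fin.last d)).trans <|
      MeasurableEquiv.prodComm.trans <|
        MeasurableEquiv.prodCongr (MeasurableEquiv.toLp 2 _) (MeasurableEquiv.refl ℝ)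

lemma splitLast_apply (x : EuclideanSpace ℝ (Fin (d + 1))) :
    splitLast d x = (dropLast x, x (Fin.last d)) := by
  simp only [splitLast, MeasurableEquiv.trans_apply, MeasurableEquiv.toLp_symm_apply,
    MeasurableEquiv.piFinSuccAbove_apply, Fin.insertNthEquiv_last, Fin.snocEquiv_symm_apply]
  rfl

lemma measurePreserving_splitLast : MeasurePreserving (splitLast d) :=
  (((PiLp.volume_preserving_toLp _).prod (MeasurePreserving.id _)).comp
    Measure.measurePreserving_swap).comp <|
      (volume_preserving_piFinSuccAbove (fun _ => ℝ) (Fin.last d)).comp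
        (EuclideanSpace.volume_preserving_symm_measurableEquiv_toLp _)

lemma volume_splitLast_preimage_regionBetween {A : Set (EuclideanSpace ℝ (Fin d))}
    {f : EuclideanSpace ℝ (Fin d) → ℝ} (hf : AEMeasurable f (volume.restrict A))
    (hA : MeasurableSet A) (h : ℝ) :
    volume (splitLast d ⁻¹' regionBetween f (fun y => f y + h) A) =
      ENNReal.ofReal h * volume A := by
  rw [measurePreserving_splitLast.measure_preimage_equiv, Measure.volume_eq_prod,
    volume_regionBetween_eq_lintegral hf (hf.add_const h) hA]
  simp

end lastCoordinate

namespace IsLipGraphDomain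

variable {d : ℕ} {K : ℝ} {Ω : Set (EuclideanSpace ℝ (Fin (d + 1)))}
  {φ : EuclideanSpace ℝ (Fin d) → ℝ} {x w : EuclideanSpace ℝ (Fin (d + 1))}

lemma nonneg (hΩ : IsLipGraphDomain d K Ω φ) : 0 ≤ K :=
  (abs_nonneg _).trans (hΩ.1 0 (mem_ball_self one_pos))

lemma continuousOn (hΩ : IsLipGraphDomain d K Ω φ) : ContinuousOn φ (ball 0 1) :=
  (LipschitzOnWith.of_dist_le_mul (f := φ) (K := ⟨K, hΩ.nonneg⟩) fun x hx y hy =>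
    Real.dist_eq (φ x) (φ y) ▸ hΩ.2.1 x hx y hy).continuousOn

lemma lt_last (hΩ : IsLipGraphDomain d K Ω φ) (hx : x ∈ Ω) (hx1 : x ∈ ball 0 1) :
    φ (dropLast x) < x (Fin.last d) := by
  have : x ∈ Ω ∩ ball 0 1 := ⟨hx, hx1⟩
  rw [hΩ.2.2.1] at this
  exact this.1

lemma last_eq (hΩ : IsLipGraphDomain d K Ω φ) (hw : w ∈ frontier Ω) (hw1 : w ∈ ball 0 1) :
    w (Fin.last d) = φ (dropLast w) := by
  have : w ∈ frontier Ω ∩ ball 0 1 := ⟨hw, hw1⟩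
  rw [hΩ.2.2.2] at this
  exact this.1

lemma last_sub_le (hΩ : IsLipGraphDomain d K Ω φ) (hx : x ∈ ball 0 1) (hw : w ∈ frontier Ω)
    (hw1 : w ∈ ball 0 1) : x (Fin.last d) - φ (dropLast x) ≤ (1 + K) * dist x w := by
  have hlast : x (Fin.last d) - w (Fin.last d) ≤ dist x w :=
    (le_abs_self _).trans (Real.dist_eq _ _ ▸ PiLp.dist_apply_le x w (Fin.last d))
  have hlip : φ (dropLast w) - φ (dropLast x) ≤ K * dist x w := calc
    _ ≤ K * dist (dropLast w) (dropLast x) :=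
      (le_abs_self _).trans (hΩ.2.1 _ (dropLast_mem_ball hw1) _ (dropLast_mem_ball hx))
    _ ≤ K * dist x w := by
      rw [dist_comm x]; exact mul_le_mul_of_nonneg_left (dist_dropLast_le w x) hΩ.nonneg
  linarith [hΩ.last_eq hw hw1]

end IsLipGraphDomain

section Whitney

variable {d : ℕ} {K : ℝ} {Ω : Set (EuclideanSpace ℝ (Fin (d + 1)))}
  {φ : EuclideanSpace ℝ (Fin d) → ℝ} {c : ℕ → EuclideanSpace ℝ (Fin (d + 1))} {r : ℕ → ℝ}

lemma IsWhitneyOf.diam_le_sDist_add (hW : IsWhitneyOf (d + 1) (Ω ∩ ball 0 1) c r) (k l : ℕ) :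
    diam (cube (d + 1) (c l) (r l)) ≤
      sDist (cube (d + 1) (c l) (r l)) (cube (d + 1) (c k) (r k)) +
        5 * diam (cube (d + 1) (c k) (r k)) := by
  obtain ⟨hr, -, -, hdist⟩ := hW
  have hQ (m : ℕ) : (cube (d + 1) (c m) (r m)).Nonempty := ⟨c m, mem_cube_self _ (hr m).le⟩
  rcases (frontier (Ω ∩ ball 0 1)).eq_empty_or_nonempty with hF | hF
  · have := (hdist l).1
    rw [hF, sDist_empty_right] at this
    linarith [sDist_nonneg (cube (d + 1) (c l) (r l)) (cube (d + 1) (c k) (r k)),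
      diam_nonneg (s := cube (d + 1) (c k) (r k))]
  · linarith [(hdist l).1, (hdist k).2,
      sDist_le_sDist_add_diam_add_sDist (hQ l) (isBounded_cube _ _) (hQ k) hF]

lemma IsWhitneyOf.last_sub_lt (hW : IsWhitneyOf (d + 1) (Ω ∩ ball 0 1) c r)
    (hΩ : IsLipGraphDomain d K Ω φ) (h0 : 0 ∈ frontier Ω) {l : ℕ}
    (hl : cube (d + 1) (c l) (r l) ⊆ ball 0 (1 / 4))
    (hpos : 0 < diam (cube (d + 1) (c l) (r l))) {x : EuclideanSpace ℝ (Fin (d + 1))}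
    (hx : x ∈ cube (d + 1) (c l) (r l)) :
    x (Fin.last d) - φ (dropLast x) < 6 * (1 + K) * diam (cube (d + 1) (c l) (r l)) := by
  set δ := diam (cube (d + 1) (c l) (r l))
  have hx4 := hl hx
  have hx1 : x ∈ ball (0 : EuclideanSpace ℝ (Fin (d + 1))) 1 := ball_subset_ball (by norm_num) hx4
  have hK : 0 < 1 + K := by linarith [hΩ.nonneg]
  obtain ⟨hδF, hFδ⟩ := hW.2.2.2 l
  obtain ⟨w, hwF, hxw⟩ := exists_dist_lt_diam_add_sDist_add (isBounded_cube _ _) hx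
    (nonempty_of_sDist_pos (hpos.trans_le hδF)) hpos
  by_cases hw1 : w ∈ ball 0 1
  · have hw : w ∈ frontier Ω := ((frontier_inter_open_inter isOpen_ball).subset ⟨hwF, hw1⟩).1
    calc x (Fin.last d) - φ (dropLast x) ≤ (1 + K) * dist x w := hΩ.last_sub_le hx1 hw hw1
      _ < (1 + K) * (6 * δ) := by gcongr; linarith
      _ = 6 * (1 + K) * δ := by ring
  · -- then `δ > 1/8`, which is large enough to use the boundary point `0` instead
    have h1w : 1 ≤ dist w 0 := by simpa using hw1
    have hx0 : dist x 0 < 1 / 4 := hx4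
    have hδ : 1 / 8 < δ := by linarith [dist_triangle w x 0, dist_comm x w]
    calc x (Fin.last d) - φ (dropLast x) ≤ (1 + K) * dist x 0 :=
          hΩ.last_sub_le hx1 h0 (mem_ball_self one_pos)
      _ < (1 + K) * (8 * δ / 4) := by gcongr; linarith
      _ ≤ 6 * (1 + K) * δ := by nlinarith

lemma memF.cube_subset {s : ℤ} {l : ℕ} (h : memF d Ω c r s l) (hr : 0 < r l) :
    cube (d + 1) (c l) (r l) ⊆ Ω ∩ ball 0 (1 / 4) :=
  (cube_mono _ (by linarith)).trans h.2.2

lemma memF.diam_pos {s : ℤ} {l : ℕ} (h : memF d Ω c r s l) :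
    0 < diam (cube (d + 1) (c l) (r l)) :=
  (zpow_pos two_pos _).trans h.1

lemma memFsj.sDist_le {s₀ s : ℤ} {k j l : ℕ} (h : memFsj d Ω c r s₀ k s j l) :
    sDist (cube (d + 1) (c l) (r l)) (cube (d + 1) (c k) (r k)) ≤ 2 ^ (-s₀ + j + 5) := by
  obtain ⟨-, h⟩ := h
  split_ifs at h with hj
  · simpa [hj] using h
  · exact h.2

lemma iUnion_memFsj_subset (hW : IsWhitneyOf (d + 1) (Ω ∩ ball 0 1) c r)
    (hΩ : IsLipGraphDomain d K Ω φ) (h0 : 0 ∈ frontier Ω) {s₀ : ℤ} {k : ℕ}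
    (hk : memF d Ω c r s₀ k) (s : ℤ) (j : ℕ) :
    ⋃ l ∈ {l : ℕ | memFsj d Ω c r s₀ k s j l}, cube (d + 1) (c l) (r l) ⊆
      splitLast d ⁻¹' regionBetween φ (fun y => φ y + 6 * (1 + K) * 2 ^ (-s))
        (cube d (dropLast (c k)) (70 * 2 ^ (-s₀ + j)) ∩ ball 0 1) := by
  simp only [iUnion_subset_iff]
  intro l hl x hx
  set ρ : ℝ := 2 ^ (-s₀ + j)
  have h32 : (2 : ℝ) ^ (-s₀ + j + 5) = 32 * ρ := by
    rw [zpow_add₀ two_ne_zero]; norm_num; ring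
  have hQk : diam (cube (d + 1) (c k) (r k)) ≤ ρ :=
    hk.2.1.trans (zpow_le_zpow_right₀ one_le_two (by omega))
  have hlk := hl.sDist_le
  have hl_diam := hW.diam_le_sDist_add k l
  have hxk := dist_le_diam_add_sDist_add_diam (isBounded_cube _ _) (isBounded_cube _ _) hx
    (mem_cube_self (c k) (hW.1 k).le)
  obtain ⟨hxΩ, hx4⟩ := hl.1.cube_subset (hW.1 l) hx
  have hx1 : x ∈ ball (0 : EuclideanSpace ℝ (Fin (d + 1))) 1 := ball_subset_ball (by norm_num) hx4
  have hlast := hW.last_sub_lt hΩ h0 ((hl.1.cube_subset (hW.1 l)).trans inter_subset_right)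
    hl.1.diam_pos hx
  have hK : 0 ≤ 6 * (1 + K) := by linarith [hΩ.nonneg]
  rw [mem_preimage, splitLast_apply]
  refine ⟨⟨dropLast_mem_cube (by linarith), dropLast_mem_ball hx1⟩, hΩ.lt_last hxΩ hx1, ?_⟩
  linarith [mul_le_mul_of_nonneg_left hl.1.2.1 hK]

end Whitney

/-- Lemma 2.6: `|F^{s,j}_{Q_k}| ≤ C 2^{(-s₀+j)(n-1) - s}` with `C = C(n, K)`. -/
theorem measure_Fsj (d : ℕ) (K : ℝ) (hK : 0 ≤ K) :
    ∃ C : ℝ, 0 < C ∧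
      ∀ (Ω : Set (EuclideanSpace ℝ (Fin (d + 1)))) (φ : EuclideanSpace ℝ (Fin d) → ℝ)
        (c : ℕ → EuclideanSpace ℝ (Fin (d + 1))) (r : ℕ → ℝ),
        IsLipGraphDomain d K Ω φ → φ 0 = 0 →
        (0 : EuclideanSpace ℝ (Fin (d + 1))) ∈ frontier Ω →
        IsWhitneyOf (d + 1) (Ω ∩ ball 0 1) c r →
        ∀ (s₀ : ℤ), 2 ≤ s₀ → ∀ k, memF d Ω c r s₀ k →
        ∀ (s : ℤ), 2 ≤ s → ∀ j : ℕ,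
          volume (⋃ l ∈ {l : ℕ | memFsj d Ω c r s₀ k s j l}, cube (d + 1) (c l) (r l)) ≤
            ENNReal.ofReal (C * (2 : ℝ) ^ ((-s₀ + (j : ℤ)) * d - s)) := by
  refine ⟨140 ^ d * (6 * (1 + K)), by positivity, ?_⟩
  intro Ω φ c r hΩ _ h0 hW s₀ _ k hk s _ j
  set ρ : ℝ := 2 ^ (-s₀ + j)
  set h : ℝ := 6 * (1 + K) * 2 ^ (-s)
  set A := cube d (dropLast (c k)) (70 * ρ) ∩ ball 0 1
  have hA : MeasurableSet A := (measurableSet_cube _ _).inter measurableSet_ball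
  have hpow : (2 : ℝ) ^ ((-s₀ + (j : ℤ)) * d - s) = ρ ^ d * 2 ^ (-s) := by
    rw [sub_eq_add_neg, zpow_add₀ two_ne_zero, zpow_mul, zpow_natCast]
  calc _ ≤ volume (splitLast d ⁻¹' regionBetween φ (fun y => φ y + h) A) :=
        measure_mono (iUnion_memFsj_subset hW hΩ h0 hk s j)
    _ = ENNReal.ofReal h * volume A := volume_splitLast_preimage_regionBetween
        ((hΩ.continuousOn.mono inter_subset_right).aemeasurable hA) hA h
    _ ≤ ENNReal.ofReal h * volume (cube d (dropLast (c k)) (70 * ρ)) := by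
        gcongr; exact inter_subset_left
    _ = _ := by
        rw [volume_cube, ← ENNReal.ofReal_pow (by positivity), ← ENNReal.ofReal_mul (by positivity),
          hpow]
        congr 1
        ring
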